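/- Let m = (σ,S) ∈ PM*(n₁,…,n_k) and let e_i be a homogeneous edge of m. Then e_i is convertible in m if and only if e_i is convertible in m' = (σ, S △ {i}) (i.e., convertibility of an edge is invariant under toggling its own mark). -/
import Mathlib


open scoped Classical
open Finset

noncomputable section

/-! Permutation statistics -/

/-- Number of weak excedances of a permutation. -/
def wexs {n : ℕ} (σ : Equiv.Perm (Fin n)) : ℕ :=
  (univ.filter fun i : Fin n => i ≤ σ i).card

/-- Number of crossings of a permutation. -/
def CRs {n : ℕ} (σ : Equiv.Perm (Fin n)) : ℕ :=
  (univ.filter fun p : Fin n × Fin n =>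
    (p.1 < p.2 ∧ p.2 ≤ σ p.1 ∧ σ p.1 < σ p.2) ∨
    (σ p.1 < σ p.2 ∧ σ p.2 < p.1 ∧ p.1 < p.2)).card

/-- The weight of a permutation. -/
def wts {n : ℕ} (σ : Equiv.Perm (Fin n)) : ℕ :=
  ∑ i : Fin n, if (i : ℕ) ≤ (σ i : ℕ) then (σ i : ℕ) - (i : ℕ) else (i : ℕ) - (σ i : ℕ) - 1

/-- The number of inversions (pairs of crossing edges) of a permutation. -/
def crossInv {n : ℕ} (σ : Equiv.Perm (Fin n)) : ℕ :=
  (univ.filter fun p : Fin n × Fin n => p.1 < p.2 ∧ σ p.2 < σ p.1).card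

/-! q-Laguerre polynomials over R = ℤ[q,y] -/

abbrev Rqy : Type := MvPolynomial (Fin 2) ℤ

def qv : Rqy := MvPolynomial.X 0
def yv : Rqy := MvPolynomial.X 1

/-- The q-integer [n]_q = 1 + q + ⋯ + q^(n-1). -/
def qint (n : ℕ) : Rqy := ∑ i ∈ range n, qv ^ i

/-- The q-Laguerre polynomials. -/
def Lag : ℕ → Polynomial Rqy
  | 0 => 1
  | 1 => Polynomial.X - Polynomial.C yv
  | (n + 2) =>
      (Polynomial.X - Polynomial.C (yv * qint (n + 2) + qint (n + 1))) * Lag (n + 1)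
        - Polynomial.C (yv * (qint (n + 1)) ^ 2) * Lag n

/-- The n-th moment. -/
def mu (n : ℕ) : Rqy := ∑ σ : Equiv.Perm (Fin n), yv ^ wexs σ * qv ^ CRs σ

/-- The linear functional 𝓛 with 𝓛(xⁿ) = μₙ. -/
def LL (p : Polynomial Rqy) : Rqy := p.sum fun n c => c * mu n

/-! Blocks / homogeneity -/

/-- Offset of the r-th block (0-based). -/
def off {k : ℕ} (n : Fin k → ℕ) (r : Fin k) : ℕ := ∑ s : Fin k, if s < r then n s else 0

/-- The edge (i, σ i) is homogeneous with respect to the composition n. -/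
def HomEdge {k N : ℕ} (n : Fin k → ℕ) (σ : Equiv.Perm (Fin N)) (i : Fin N) : Prop :=
  ∃ r : Fin k, off n r ≤ (i : ℕ) ∧ (i : ℕ) < off n r + n r ∧
    off n r ≤ (σ i : ℕ) ∧ (σ i : ℕ) < off n r + n r

/-! Matchings -/

/-- A matching of degree n: a partial injective assignment of lower vertices to
upper vertices. -/
def Matching (n : ℕ) : Type :=
  {f : Fin n → Option (Fin n) // ∀ i j a, f i = some a → f j = some a → i = j}

instance (n : ℕ) : Fintype (Matching n) := Subtype.fintype _

/-- Number of edges of a matching. -/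
def eM {n : ℕ} (π : Matching n) : ℕ := (univ.filter fun i => (π.1 i).isSome).card

/-- Lower vertex j is unmatched. -/
def unmatchedLower {n : ℕ} (π : Matching n) (j : Fin n) : Prop := ∀ i, π.1 i ≠ some j

/-- Upper block index. -/
def bindUM {n : ℕ} (π : Matching n) (i : Fin n) : ℕ :=
  1 + (univ.filter fun i' => i' < i ∧ π.1 i' = none).card

/-- Lower block index. -/
def bindLM {n : ℕ} (π : Matching n) (j : Fin n) : ℕ :=
  1 + (univ.filter fun j' => j' < j ∧ unmatchedLower π j').card

/-- Block difference of the edge at upper vertex i (only meaningful when i is matched). -/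
def bdiffM {n : ℕ} (π : Matching n) (i : Fin n) : ℤ :=
  (bindLM π ((π.1 i).getD i) : ℤ) - (bindUM π i : ℤ)

/-- Number of block weak excedances. -/
def bwexM {n : ℕ} (π : Matching n) : ℕ :=
  (univ.filter fun i => (π.1 i).isSome ∧ 0 ≤ bdiffM π i).card

/-- The block weight. -/
def bwtM {n : ℕ} (π : Matching n) : ℕ :=
  (∑ i ∈ univ.filter (fun i => (π.1 i).isSome),
    if 0 ≤ bdiffM π i then bdiffM π i else -bdiffM π i - 1).toNat

/-- Number of crossings of a matching. -/
def crossM {n : ℕ} (π : Matching n) : ℕ :=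
  (univ.filter fun p : Fin n × Fin n => p.1 < p.2 ∧
    ∃ a b, π.1 p.1 = some a ∧ π.1 p.2 = some b ∧ b < a).card

/-- Edge (i,a) is homogeneous with respect to n. -/
def HomIdx {k N : ℕ} (n : Fin k → ℕ) (i a : Fin N) : Prop :=
  ∃ r : Fin k, off n r ≤ (i : ℕ) ∧ (i : ℕ) < off n r + n r ∧
    off n r ≤ (a : ℕ) ∧ (a : ℕ) < off n r + n r

/-! Marked perfect matchings -/

/-- S is a valid set of marked edges: it contains every inhomogeneous edge. -/
def ValidMark {k N : ℕ} (n : Fin k → ℕ) (σ : Equiv.Perm (Fin N)) (S : Finset (Fin N)) : Prop :=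
  ∀ i, ¬ HomEdge n σ i → i ∈ S

/-- Upper block index of a marked perfect matching. -/
def bindU {N : ℕ} (S : Finset (Fin N)) (i : Fin N) : ℕ :=
  1 + (S.filter fun j => j < i).card

/-- Lower block index of a marked perfect matching. -/
def bindL {N : ℕ} (σ : Equiv.Perm (Fin N)) (S : Finset (Fin N)) (l : Fin N) : ℕ :=
  1 + (S.filter fun j => σ j < l).card

/-- Block difference of the edge e_i. -/
def bdiff {N : ℕ} (σ : Equiv.Perm (Fin N)) (S : Finset (Fin N)) (i : Fin N) : ℤ :=
  (bindL σ S (σ i) : ℤ) - (bindU S i : ℤ)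

/-- Number of unmarked edges. -/
def eem {N : ℕ} (S : Finset (Fin N)) : ℕ := N - S.card

/-- Number of block weak excedances of a marked perfect matching. -/
def bwexm {N : ℕ} (σ : Equiv.Perm (Fin N)) (S : Finset (Fin N)) : ℕ :=
  (univ.filter fun i => 0 ≤ bdiff σ S i).card

/-- The weight of a marked perfect matching. -/
def wtm {N : ℕ} (σ : Equiv.Perm (Fin N)) (S : Finset (Fin N)) : ℕ :=
  (∑ i : Fin N, if 0 ≤ bdiff σ S i then bdiff σ S i else -bdiff σ S i - 1).toNat

/-- The (signed) crossing number of a marked perfect matching. -/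
def crossm {N : ℕ} (σ : Equiv.Perm (Fin N)) (S : Finset (Fin N)) : ℤ :=
  ((univ.filter fun p : Fin N × Fin N =>
      p.1 < p.2 ∧ σ p.2 < σ p.1 ∧ p.1 ∉ S ∧ p.2 ∉ S).card : ℤ)
  - ((univ.filter fun p : Fin N × Fin N =>
      p.1 < p.2 ∧ σ p.2 < σ p.1 ∧ p.1 ∈ S ∧ p.2 ∈ S).card : ℤ)

/-- The edge e_j crosses the edge e_i from the left. -/
def CrossLeft {N : ℕ} (σ : Equiv.Perm (Fin N)) (j i : Fin N) : Prop :=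
  j < i ∧ σ i < σ j

/-- The homogeneous edge e_i is convertible in (σ, S). -/
def Convertible {N : ℕ} (σ : Equiv.Perm (Fin N)) (S : Finset (Fin N)) (i : Fin N) : Prop :=
  if i ∈ S then
    (∀ j, CrossLeft σ j i → 0 < bdiff σ S j) ∧ (∀ j, CrossLeft σ i j → bdiff σ S j < -1)
  else
    (∀ j, CrossLeft σ j i → 0 ≤ bdiff σ S j) ∧ (∀ j, CrossLeft σ i j → bdiff σ S j ≤ -1)

/-- Toggle the mark on edge i. -/
def toggle {N : ℕ} (S : Finset (Fin N)) (i : Fin N) : Finset (Fin N) :=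
  if i ∈ S then S.erase i else insert i S

lemma bdiff_insert {N : ℕ} (σ : Equiv.Perm (Fin N)) (S : Finset (Fin N)) (i j : Fin N)
    (hi : i ∉ S) :
    bdiff σ (insert i S) j =
      bdiff σ S j + (if σ i < σ j then 1 else 0) - (if i < j then 1 else 0) := by
  unfold bdiff bindL bindU
  rw [filter_insert, filter_insert]
  have h1 : i ∉ S.filter fun l => σ l < σ j := fun h => hi (mem_filter.mp h).1
  have h2 : i ∉ S.filter fun l => l < j := fun h => hi (mem_filter.mp h).1
  split <;> split <;>
    simp [card_insert_of_notMem, h1, h2] <;> push_cast <;> ring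

end
/-- convertibility of a homogeneous edge is invariant under
toggling its own mark. -/
theorem convertible_iff_toggle {k N : ℕ} (n : Fin k → ℕ)
    (hn : ∀ r, 0 < n r) (hN : N = ∑ r, n r)
    (σ : Equiv.Perm (Fin N)) (S : Finset (Fin N)) (hS : ValidMark n σ S)
    (i : Fin N) (hih : HomEdge n σ i) :
    Convertible σ S i ↔ Convertible σ (toggle S i) i := by
  classical
  by_cases hi : i ∈ S
  · -- toggle = erase
    have hiE : i ∉ S.erase i := notMem_erase i S
    have hSE : insert i (S.erase i) = S := insert_erase hi
    unfold Convertible toggle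
    rw [if_pos hi, if_pos hi, if_neg hiE]
    have hb : ∀ j, bdiff σ S j =
        bdiff σ (S.erase i) j + (if σ i < σ j then 1 else 0) - (if i < j then 1 else 0) := by
      intro j
      conv_lhs => rw [← hSE]
      rw [bdiff_insert σ (S.erase i) i j hiE]
    constructor
    · rintro ⟨hL, hR⟩
      refine ⟨fun j hj => ?_, fun j hj => ?_⟩
      · have := hL j hj
        rw [hb j] at this
        obtain ⟨h1, h2⟩ := hj
        rw [if_pos h2, if_neg (asymm h1)] at this
        omega
      · have := hR j hj
        rw [hb j] at this
        obtain ⟨h1, h2⟩ := hj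
        rw [if_neg (asymm h2), if_pos h1] at this
        omega
    · rintro ⟨hL, hR⟩
      refine ⟨fun j hj => ?_, fun j hj => ?_⟩
      · have := hL j hj
        rw [hb j]
        obtain ⟨h1, h2⟩ := hj
        rw [if_pos h2, if_neg (asymm h1)]
        omega
      · have := hR j hj
        rw [hb j]
        obtain ⟨h1, h2⟩ := hj
        rw [if_neg (asymm h2), if_pos h1]
        omega
  · -- toggle = insert
    unfold Convertible toggle
    rw [if_neg hi, if_neg hi, if_pos (mem_insert_self i S)]
    have hb := bdiff_insert σ S i
    constructor
    · rintro ⟨hL, hR⟩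
      refine ⟨fun j hj => ?_, fun j hj => ?_⟩
      · have := hL j hj
        rw [hb j hi]
        obtain ⟨h1, h2⟩ := hj
        rw [if_pos h2, if_neg (asymm h1)]
        omega
      · have := hR j hj
        rw [hb j hi]
        obtain ⟨h1, h2⟩ := hj
        rw [if_neg (asymm h2), if_pos h1]
        omega
    · rintro ⟨hL, hR⟩
      refine ⟨fun j hj => ?_, fun j hj => ?_⟩
      · have := hL j hj
        rw [hb j hi] at this
        obtain ⟨h1, h2⟩ := hj
        rw [if_pos h2, if_neg (asymm h1)] at this
        omega
      · have := hR j hj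
        rw [hb j hi] at this
        obtain ⟨h1, h2⟩ := hj
        rw [if_neg (asymm h2), if_pos h1] at this
        omega
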